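/- Let v, w : ℝ² → ℝ be smooth functions of (x, t) that are 1-periodic in x and satisfy the coupled KdV equations. Then the functional H₂(t) = ∫₀¹ ( (3/2) v(x,t)² w(x,t) + (1/4) v(x,t) w_{xx}(x,t) ) dx is constant in t. -/

import Mathlib

/-- Partial derivative in the `x`-direction of a function of `(x, t) : ℝ × ℝ`. -/
noncomputable def pdX (f : ℝ × ℝ → ℝ) : ℝ × ℝ → ℝ :=
  fun p => lineDeriv ℝ f p (1, 0)

/-- Partial derivative in the `t`-direction. -/
noncomputable def pdT (f : ℝ × ℝ → ℝ) : ℝ × ℝ → ℝ :=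
  fun p => lineDeriv ℝ f p (0, 1)

section Infra

variable {f g : ℝ × ℝ → ℝ}

theorem pdX_eq (hf : Differentiable ℝ f) :
    pdX f = fun p => fderiv ℝ f p (1, 0) :=
  funext fun p => (hf p).lineDeriv_eq_fderiv

theorem pdT_eq (hf : Differentiable ℝ f) :
    pdT f = fun p => fderiv ℝ f p (0, 1) :=
  funext fun p => (hf p).lineDeriv_eq_fderiv

theorem ContDiff.pdX (hf : ContDiff ℝ (⊤ : ℕ∞) f) : ContDiff ℝ (⊤ : ℕ∞) (pdX f) := by
  rw [pdX_eq (hf.differentiable (by simp))]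
  exact (hf.fderiv_right (by simp)).clm_apply contDiff_const

theorem ContDiff.pdT (hf : ContDiff ℝ (⊤ : ℕ∞) f) : ContDiff ℝ (⊤ : ℕ∞) (pdT f) := by
  rw [pdT_eq (hf.differentiable (by simp))]
  exact (hf.fderiv_right (by simp)).clm_apply contDiff_const

theorem pdX_pdT_comm (hf : ContDiff ℝ (⊤ : ℕ∞) f) (p : ℝ × ℝ) :
    pdX (pdT f) p = pdT (pdX f) p := by
  have hd : Differentiable ℝ f := hf.differentiable (by simp)
  have hd' : Differentiable ℝ (fderiv ℝ f) := (hf.fderiv_right (m := (⊤ : ℕ∞)) (by simp)).differentiable (by simp)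
  have h1 : Differentiable ℝ (pdT f) := by
    rw [pdT_eq hd]; exact fun q => (hd' q).clm_apply (differentiableAt_const _)
  have h2 : Differentiable ℝ (pdX f) := by
    rw [pdX_eq hd]; exact fun q => (hd' q).clm_apply (differentiableAt_const _)
  have e1 : pdX (pdT f) p = fderiv ℝ (pdT f) p (1, 0) := congrFun (pdX_eq h1) p
  have e2 : pdT (pdX f) p = fderiv ℝ (pdX f) p (0, 1) := congrFun (pdT_eq h2) p
  rw [e1, e2, pdT_eq hd, pdX_eq hd,
    fderiv_clm_apply (hd' p) (differentiableAt_const ((0:ℝ), (1:ℝ))),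
    fderiv_clm_apply (hd' p) (differentiableAt_const ((1:ℝ), (0:ℝ)))]
  simp only [fderiv_fun_const, Pi.zero_apply, ContinuousLinearMap.comp_zero, zero_add,
    ContinuousLinearMap.add_apply, ContinuousLinearMap.flip_apply]
  exact (second_derivative_symmetric (fun y => (hd y).hasFDerivAt) (hd' p).hasFDerivAt _ _).symm

theorem pdX_mul (hf : Differentiable ℝ f) (hg : Differentiable ℝ g) :
    pdX (fun p => f p * g p) = fun p => pdX f p * g p + f p * pdX g p := by
  rw [pdX_eq (f := fun p => f p * g p) (hf.mul hg), pdX_eq hf, pdX_eq hg]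
  funext p
  rw [fderiv_fun_mul (hf p) (hg p)]
  simp only [ContinuousLinearMap.add_apply, ContinuousLinearMap.smul_apply, smul_eq_mul]
  ring

theorem pdT_mul (hf : Differentiable ℝ f) (hg : Differentiable ℝ g) :
    pdT (fun p => f p * g p) = fun p => pdT f p * g p + f p * pdT g p := by
  rw [pdT_eq (f := fun p => f p * g p) (hf.mul hg), pdT_eq hf, pdT_eq hg]
  funext p
  rw [fderiv_fun_mul (hf p) (hg p)]
  simp only [ContinuousLinearMap.add_apply, ContinuousLinearMap.smul_apply, smul_eq_mul]
  ring

theorem pdX_add (hf : Differentiable ℝ f) (hg : Differentiable ℝ g) :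
    pdX (fun p => f p + g p) = fun p => pdX f p + pdX g p := by
  rw [pdX_eq (f := fun p => f p + g p) (hf.add hg), pdX_eq hf, pdX_eq hg]
  funext p
  rw [fderiv_fun_add (hf p) (hg p)]; simp

theorem pdT_add (hf : Differentiable ℝ f) (hg : Differentiable ℝ g) :
    pdT (fun p => f p + g p) = fun p => pdT f p + pdT g p := by
  rw [pdT_eq (f := fun p => f p + g p) (hf.add hg), pdT_eq hf, pdT_eq hg]
  funext p
  rw [fderiv_fun_add (hf p) (hg p)]; simp

theorem pdX_sub (hf : Differentiable ℝ f) (hg : Differentiable ℝ g) :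
    pdX (fun p => f p - g p) = fun p => pdX f p - pdX g p := by
  rw [pdX_eq (f := fun p => f p - g p) (hf.sub hg), pdX_eq hf, pdX_eq hg]
  funext p
  rw [fderiv_fun_sub (hf p) (hg p)]; simp

theorem pdT_sub (hf : Differentiable ℝ f) (hg : Differentiable ℝ g) :
    pdT (fun p => f p - g p) = fun p => pdT f p - pdT g p := by
  rw [pdT_eq (f := fun p => f p - g p) (hf.sub hg), pdT_eq hf, pdT_eq hg]
  funext p
  rw [fderiv_fun_sub (hf p) (hg p)]; simp

theorem pdX_cmul (c : ℝ) (hf : Differentiable ℝ f) :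
    pdX (fun p => c * f p) = fun p => c * pdX f p := by
  rw [pdX_eq (hf.const_mul c), pdX_eq hf]
  funext p
  rw [fderiv_const_mul (hf p)]; simp

theorem pdT_cmul (c : ℝ) (hf : Differentiable ℝ f) :
    pdT (fun p => c * f p) = fun p => c * pdT f p := by
  rw [pdT_eq (hf.const_mul c), pdT_eq hf]
  funext p
  rw [fderiv_const_mul (hf p)]; simp

theorem pdX_const (c : ℝ) : pdX (fun _ => c) = fun _ => (0:ℝ) := by
  rw [pdX_eq (differentiable_const c)]; simp

theorem pdT_const (c : ℝ) : pdT (fun _ => c) = fun _ => (0:ℝ) := by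
  rw [pdT_eq (differentiable_const c)]; simp

/-- `pdX` preserves 1-periodicity in `x`. -/
theorem pdX_periodic (hf : ∀ x t : ℝ, f (x + 1, t) = f (x, t)) (x t : ℝ) :
    pdX f (x + 1, t) = pdX f (x, t) := by
  show lineDeriv ℝ f (x + 1, t) (1, 0) = lineDeriv ℝ f (x, t) (1, 0)
  unfold lineDeriv
  congr 1
  funext s
  have e1 : ((x + 1, t) : ℝ × ℝ) + s • ((1:ℝ), (0:ℝ)) = ((x + s) + 1, t) := by
    simp [Prod.ext_iff]; ring
  have e2 : ((x, t) : ℝ × ℝ) + s • ((1:ℝ), (0:ℝ)) = (x + s, t) := by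
    simp [Prod.ext_iff]
  rw [e1, e2, hf]

/-- Derivative of an `x`-slice. -/
theorem hasDerivAt_sliceX (hf : Differentiable ℝ f) (t x : ℝ) :
    HasDerivAt (fun y => f (y, t)) (pdX f (x, t)) x := by
  have h := (hf (x, t)).hasFDerivAt.comp_hasDerivAt x
    ((hasDerivAt_id x).prodMk (hasDerivAt_const x t))
  rw [congrFun (pdX_eq hf) (x, t)]
  exact h

/-- Derivative of a `t`-slice. -/
theorem hasDerivAt_sliceT (hf : Differentiable ℝ f) (x t : ℝ) :
    HasDerivAt (fun s => f (x, s)) (pdT f (x, t)) t := by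
  have h := (hf (x, t)).hasFDerivAt.comp_hasDerivAt t
    ((hasDerivAt_const t x).prodMk (hasDerivAt_id t))
  rw [congrFun (pdT_eq hf) (x, t)]
  exact h

end Infra

/-- The density of `H₂`. -/
noncomputable def ggH (v w : ℝ × ℝ → ℝ) : ℝ × ℝ → ℝ :=
  fun p => 3 / 2 * (v p * v p) * w p + 1 / 4 * (v p * pdX (pdX w) p)

/-- The flux function for the conservation law `∂ₜ ggH = ∂ₓ FnH`. -/
noncomputable def FnH (v w : ℝ × ℝ → ℝ) : ℝ × ℝ → ℝ :=
  fun p => 9 / 2 * (v p * (v p * (v p * w p)))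
    + 9 / 8 * (v p * (v p * pdX (pdX w) p))
    + 3 / 2 * (v p * (pdX (pdX v) p * w p))
    + 3 / 4 * (v p * (pdX v p * pdX w p))
    - 3 / 4 * (pdX v p * (pdX v p * w p))
    + 1 / 16 * (v p * pdX (pdX (pdX (pdX w))) p)
    - 1 / 16 * (pdX v p * pdX (pdX (pdX w)) p)
    + 1 / 16 * (pdX (pdX v) p * pdX (pdX w) p)


theorem ggH_def (v w : ℝ × ℝ → ℝ) : ggH v w
    = fun p => 3 / 2 * (v p * v p) * w p + 1 / 4 * (v p * pdX (pdX w) p) := rfl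

theorem FnH_def (v w : ℝ × ℝ → ℝ) : FnH v w
    = fun p => 9 / 2 * (v p * (v p * (v p * w p)))
    + 9 / 8 * (v p * (v p * pdX (pdX w) p))
    + 3 / 2 * (v p * (pdX (pdX v) p * w p))
    + 3 / 4 * (v p * (pdX v p * pdX w p))
    - 3 / 4 * (pdX v p * (pdX v p * w p))
    + 1 / 16 * (v p * pdX (pdX (pdX (pdX w))) p)
    - 1 / 16 * (pdX v p * pdX (pdX (pdX w)) p)
    + 1 / 16 * (pdX (pdX v) p * pdX (pdX w) p) := rfl

/-- if smooth `v w : ℝ² → ℝ` are 1-periodic in `x` and satisfy the coupled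
KdV equations, then `H₂(t) = ∫₀¹ ((3/2)v²w + (1/4)v w_{xx}) dx` is constant in `t`. -/
theorem stmt15 (v w : ℝ × ℝ → ℝ) (hv : ContDiff ℝ (⊤ : ℕ∞) v) (hw : ContDiff ℝ (⊤ : ℕ∞) w)
    (hvper : ∀ x t : ℝ, v (x + 1, t) = v (x, t))
    (hwper : ∀ x t : ℝ, w (x + 1, t) = w (x, t))
    (hkdv1 : ∀ p, 4 * pdT v p - 12 * (v p * pdX v p) - pdX (pdX (pdX v)) p = 0)
    (hkdv2 : ∀ p, 4 * pdT w p - 12 * pdX (fun q => v q * w q) p - pdX (pdX (pdX w)) p = 0) :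
    ∀ t₁ t₂ : ℝ,
      (∫ x in (0:ℝ)..1, (3 / 2) * v (x, t₁) ^ 2 * w (x, t₁)
          + (1 / 4) * v (x, t₁) * pdX (pdX w) (x, t₁))
        = ∫ x in (0:ℝ)..1, (3 / 2) * v (x, t₂) ^ 2 * w (x, t₂)
            + (1 / 4) * v (x, t₂) * pdX (pdX w) (x, t₂) := by
  -- smoothness of all atoms
  have cv1 : ContDiff ℝ (⊤ : ℕ∞) (pdX v) := hv.pdX
  have cv2 : ContDiff ℝ (⊤ : ℕ∞) (pdX (pdX v)) := cv1.pdX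
  have cv3 : ContDiff ℝ (⊤ : ℕ∞) (pdX (pdX (pdX v))) := cv2.pdX
  have cw1 : ContDiff ℝ (⊤ : ℕ∞) (pdX w) := hw.pdX
  have cw2 : ContDiff ℝ (⊤ : ℕ∞) (pdX (pdX w)) := cw1.pdX
  have cw3 : ContDiff ℝ (⊤ : ℕ∞) (pdX (pdX (pdX w))) := cw2.pdX
  have cw4 : ContDiff ℝ (⊤ : ℕ∞) (pdX (pdX (pdX (pdX w)))) := cw3.pdX
  have cw5 : ContDiff ℝ (⊤ : ℕ∞) (pdX (pdX (pdX (pdX (pdX w))))) := cw4.pdX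
  have dv : Differentiable ℝ v := hv.differentiable (by simp)
  have dw : Differentiable ℝ w := hw.differentiable (by simp)
  have dv1 : Differentiable ℝ (pdX v) := cv1.differentiable (by simp)
  have dv2 : Differentiable ℝ (pdX (pdX v)) := cv2.differentiable (by simp)
  have dv3 : Differentiable ℝ (pdX (pdX (pdX v))) := cv3.differentiable (by simp)
  have dw1 : Differentiable ℝ (pdX w) := cw1.differentiable (by simp)
  have dw2 : Differentiable ℝ (pdX (pdX w)) := cw2.differentiable (by simp)
  have dw3 : Differentiable ℝ (pdX (pdX (pdX w))) := cw3.differentiable (by simp)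
  have dw4 : Differentiable ℝ (pdX (pdX (pdX (pdX w)))) := cw4.differentiable (by simp)
  have dw5 : Differentiable ℝ (pdX (pdX (pdX (pdX (pdX w))))) := cw5.differentiable (by simp)
  have dvw : Differentiable ℝ (fun q => v q * w q) := dv.mul dw
  have dvw1 : Differentiable ℝ (pdX (fun q => v q * w q)) :=
    ((hv.mul hw).pdX).differentiable (by simp)
  have dwt : Differentiable ℝ (pdT w) := (hw.pdT).differentiable (by simp)
  -- smoothness of the density and the flux
  have cgg : ContDiff ℝ (⊤ : ℕ∞) (ggH v w) := by
    rw [ggH_def]; fun_prop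
  have cFn : ContDiff ℝ (⊤ : ℕ∞) (FnH v w) := by
    rw [FnH_def]; fun_prop
  have dgg : Differentiable ℝ (ggH v w) := cgg.differentiable (by simp)
  have dFn : Differentiable ℝ (FnH v w) := cFn.differentiable (by simp)
  -- the time-derivative equations
  have hvt : pdT v = fun q => 3 * (v q * pdX v q) + 1 / 4 * pdX (pdX (pdX v)) q := by
    funext q; have := hkdv1 q; linarith
  have hwt : pdT w = fun q => 3 * pdX (fun r => v r * w r) q + 1 / 4 * pdX (pdX (pdX w)) q := by
    funext q; have := hkdv2 q; linarith
  -- commute the mixed partial: ∂ₜ∂ₓ∂ₓ w = ∂ₓ∂ₓ∂ₜ w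
  have c1 : pdT (pdX w) = pdX (pdT w) := funext fun q => (pdX_pdT_comm hw q).symm
  have c2 : pdT (pdX (pdX w)) = pdX (pdX (pdT w)) := by
    have := funext fun q => (pdX_pdT_comm cw1 q).symm
    rw [this, c1]
  -- the conservation law:  ∂ₜ ggH = ∂ₓ FnH
  have key : ∀ p, pdT (ggH v w) p = pdX (FnH v w) p := by
    intro p
    simp (disch := fun_prop) only [ggH_def, FnH_def, pdT_mul, pdT_add, pdT_sub, pdT_cmul, pdT_const,
      c2, hvt, hwt, pdX_mul, pdX_add, pdX_sub, pdX_cmul, pdX_const]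
    ring
  -- periodicity of the flux
  have hv1per : ∀ x t : ℝ, pdX v (x + 1, t) = pdX v (x, t) := pdX_periodic hvper
  have hv2per : ∀ x t : ℝ, pdX (pdX v) (x + 1, t) = pdX (pdX v) (x, t) := pdX_periodic hv1per
  have hw1per : ∀ x t : ℝ, pdX w (x + 1, t) = pdX w (x, t) := pdX_periodic hwper
  have hw2per : ∀ x t : ℝ, pdX (pdX w) (x + 1, t) = pdX (pdX w) (x, t) := pdX_periodic hw1per
  have hw3per : ∀ x t : ℝ, pdX (pdX (pdX w)) (x + 1, t) = pdX (pdX (pdX w)) (x, t) :=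
    pdX_periodic hw2per
  have hw4per : ∀ x t : ℝ, pdX (pdX (pdX (pdX w))) (x + 1, t) = pdX (pdX (pdX (pdX w))) (x, t) :=
    pdX_periodic hw3per
  have hFnper : ∀ x t : ℝ, FnH v w (x + 1, t) = FnH v w (x, t) := by
    intro x t
    simp only [FnH_def, hvper, hwper, hv1per, hv2per, hw1per, hw2per, hw3per, hw4per]
  -- FTC in x: for each s, ∫₀¹ ∂ₓ FnH (x,s) dx = 0
  have ftcX : ∀ s : ℝ, (∫ x in (0:ℝ)..1, pdX (FnH v w) (x, s)) = 0 := by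
    intro s
    have hcont : Continuous fun x : ℝ => pdX (FnH v w) (x, s) :=
      (cFn.pdX.continuous).comp (continuous_id.prodMk continuous_const)
    rw [intervalIntegral.integral_eq_sub_of_hasDerivAt
      (f := fun x => FnH v w (x, s)) (fun x _ => hasDerivAt_sliceX dFn s x)
      (hcont.intervalIntegrable 0 1)]
    have := hFnper 0 s
    rw [zero_add] at this
    rw [this, sub_self]
  -- FTC in t: for each x, ∫_{a}^{b} ∂ₜ ggH (x,s) ds = ggH (x,b) - ggH (x,a)
  have ftcT : ∀ (x a b : ℝ), (∫ s in a..b, pdT (ggH v w) (x, s)) = ggH v w (x, b) - ggH v w (x, a) := by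
    intro x a b
    have hcont : Continuous fun s : ℝ => pdT (ggH v w) (x, s) :=
      (cgg.pdT.continuous).comp (continuous_const.prodMk continuous_id)
    exact intervalIntegral.integral_eq_sub_of_hasDerivAt
      (f := fun s => ggH v w (x, s)) (fun s _ => hasDerivAt_sliceT dgg x s)
      (hcont.intervalIntegrable a b)
  -- the main monotone case
  have main : ∀ a b : ℝ, a ≤ b →
      (∫ x in (0:ℝ)..1, ggH v w (x, a)) = ∫ x in (0:ℝ)..1, ggH v w (x, b) := by
    intro a b hab
    have hcontb : Continuous fun x : ℝ => ggH v w (x, b) :=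
      (cgg.continuous).comp (continuous_id.prodMk continuous_const)
    have hconta : Continuous fun x : ℝ => ggH v w (x, a) :=
      (cgg.continuous).comp (continuous_id.prodMk continuous_const)
    have hsub : (∫ x in (0:ℝ)..1, ggH v w (x, b)) - (∫ x in (0:ℝ)..1, ggH v w (x, a))
        = ∫ x in (0:ℝ)..1, (ggH v w (x, b) - ggH v w (x, a)) :=
      (intervalIntegral.integral_sub (hcontb.intervalIntegrable 0 1)
        (hconta.intervalIntegrable 0 1)).symm
    have hstep : (∫ x in (0:ℝ)..1, (ggH v w (x, b) - ggH v w (x, a)))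
        = ∫ x in (0:ℝ)..1, ∫ s in a..b, pdT (ggH v w) (x, s) := by
      apply intervalIntegral.integral_congr
      intro x _
      exact (ftcT x a b).symm
    -- convert to set integrals and apply Fubini
    have hint : MeasureTheory.Integrable (Function.uncurry fun x s => pdT (ggH v w) (x, s))
        ((MeasureTheory.volume.restrict (Set.Ioc (0:ℝ) 1)).prod
          (MeasureTheory.volume.restrict (Set.Ioc a b))) := by
      have hprod : (MeasureTheory.volume.restrict (Set.Ioc (0:ℝ) 1)).prod
          (MeasureTheory.volume.restrict (Set.Ioc a b))
          = (MeasureTheory.volume : MeasureTheory.Measure (ℝ × ℝ)).restrict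
              ((Set.Ioc (0:ℝ) 1) ×ˢ (Set.Ioc a b)) := by
        rw [MeasureTheory.Measure.volume_eq_prod, MeasureTheory.Measure.prod_restrict]
      rw [hprod]
      have hIcc : MeasureTheory.IntegrableOn (pdT (ggH v w))
          ((Set.Icc (0:ℝ) 1) ×ˢ (Set.Icc a b)) MeasureTheory.volume :=
        (cgg.pdT.continuous.continuousOn).integrableOn_compact
          (isCompact_Icc.prod isCompact_Icc)
      have hsub' : ((Set.Ioc (0:ℝ) 1) ×ˢ (Set.Ioc a b)) ⊆ ((Set.Icc (0:ℝ) 1) ×ˢ (Set.Icc a b)) :=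
        Set.prod_mono Set.Ioc_subset_Icc_self Set.Ioc_subset_Icc_self
      exact (hIcc.mono_set hsub')
    have hswap : (∫ x in Set.Ioc (0:ℝ) 1, ∫ s in Set.Ioc a b, pdT (ggH v w) (x, s))
        = ∫ s in Set.Ioc a b, ∫ x in Set.Ioc (0:ℝ) 1, pdT (ggH v w) (x, s) :=
      MeasureTheory.integral_integral_swap hint
    have hinner : ∀ s : ℝ, (∫ x in Set.Ioc (0:ℝ) 1, pdT (ggH v w) (x, s)) = 0 := by
      intro s
      rw [← intervalIntegral.integral_of_le (zero_le_one)]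
      rw [show (fun x : ℝ => pdT (ggH v w) (x, s)) = fun x : ℝ => pdX (FnH v w) (x, s) from
        funext fun x => key (x, s)]
      exact ftcX s
    have : (∫ x in (0:ℝ)..1, ∫ s in a..b, pdT (ggH v w) (x, s)) = 0 := by
      rw [intervalIntegral.integral_of_le (zero_le_one)]
      have : ∀ x : ℝ, (∫ s in a..b, pdT (ggH v w) (x, s))
          = ∫ s in Set.Ioc a b, pdT (ggH v w) (x, s) := fun x =>
        intervalIntegral.integral_of_le hab
      rw [MeasureTheory.setIntegral_congr_fun measurableSet_Ioc (fun x _ => this x)]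
      rw [hswap]
      simp [hinner]
    have hzero : (∫ x in (0:ℝ)..1, ggH v w (x, b)) - (∫ x in (0:ℝ)..1, ggH v w (x, a)) = 0 := by
      rw [hsub, hstep, this]
    linarith
  -- wrap up
  intro t₁ t₂
  have e : ∀ t : ℝ,
      (∫ x in (0:ℝ)..1, (3 / 2) * v (x, t) ^ 2 * w (x, t)
        + (1 / 4) * v (x, t) * pdX (pdX w) (x, t))
      = ∫ x in (0:ℝ)..1, ggH v w (x, t) := by
    intro t
    apply intervalIntegral.integral_congr
    intro x _
    rw [ggH_def]
    ring
  rw [e t₁, e t₂]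
  rcases le_total t₁ t₂ with h | h
  · exact main t₁ t₂ h
  · exact (main t₂ t₁ h).symm
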